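/- arXiv:1912.00621 — 2 statements merged into one kernel-verified Lean document; each statement's English description precedes it below -/
import Mathlib

section
/- Let C be an essentially small extriangulated category and let X be a dense subcategory of C (i.e. add(X) = C). Then X is closed under Cone of inflations if and only if X is closed under CoCone of deflations. -/
open CategoryTheory CategoryTheory.Limits Opposite ZeroObject

attribute [local instance] CategoryTheory.Limits.hasBinaryBiproducts_of_finite_biproducts

universe w v u

noncomputable section

/-- An object of a preadditive category with finite biproducts is *indecomposable* if it is
nonzero and admits no nontrivial direct sum decomposition. -/
def Indec {C : Type u} [Category.{v} C] [Preadditive C] [HasFiniteBiproducts C] (X : C) : Prop :=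
  ¬ IsZero X ∧ ∀ (Y Z : C), Nonempty (X ≅ Y ⊞ Z) → IsZero Y ∨ IsZero Z

/-- A preadditive category is *Krull-Schmidt* if every object is (isomorphic to) a finite
biproduct of objects having local endomorphism rings. -/
def IsKrullSchmidt (C : Type u) [Category.{v} C] [Preadditive C] [HasFiniteBiproducts C] : Prop :=
  ∀ X : C, ∃ (n : ℕ) (f : Fin n → C),
    (∀ i, IsLocalRing (CategoryTheory.End (f i))) ∧ Nonempty (X ≅ ⨁ f)

/-- `C` is *locally finite*: for every indecomposable `A` there are, up to isomorphism, only
finitely many indecomposables `B` with `Hom(A, B) ≠ 0`, and only finitely many indecomposables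
`B` with `Hom(B, A) ≠ 0`. -/
def LocFinite (C : Type u) [Category.{v} C] [Preadditive C] [HasFiniteBiproducts C] : Prop :=
  ∀ A : C, Indec A →
    (∃ (n : ℕ) (ind : Fin n → C), ∀ B : C, Indec B → (∃ φ : A ⟶ B, φ ≠ 0) →
        ∃ i, Nonempty (B ≅ ind i)) ∧
    (∃ (n : ℕ) (ind : Fin n → C), ∀ B : C, Indec B → (∃ φ : B ⟶ A, φ ≠ 0) →
        ∃ i, Nonempty (B ≅ ind i))

/-- `X` is a *dense* subcategory: `add X = C`, i.e. every object of `C` is a direct summand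
of an object of `X`. -/
def DenseSub {C : Type u} [Category.{v} C] [Preadditive C] [HasFiniteBiproducts C]
    (X : Set C) : Prop :=
  ∀ A : C, ∃ X₀ ∈ X, ∃ B : C, Nonempty (X₀ ≅ A ⊞ B)

/-- `X` is a full additive subcategory closed under isomorphisms (given as a set of objects). -/
def AddSub (C : Type u) [Category.{v} C] [Preadditive C] [HasFiniteBiproducts C]
    (X : Set C) : Prop :=
  (0 : C) ∈ X ∧ (∀ {A B : C}, A ∈ X → B ∈ X → (A ⊞ B) ∈ X) ∧
    (∀ {A B : C}, A ∈ X → Nonempty (A ≅ B) → B ∈ X)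

section ExtCatDef

variable (C : Type u) [Category.{v} C] [Preadditive C] [HasFiniteBiproducts C]

/-- An extriangulated structure (in the sense of Nakaoka–Palu) on the additive category `C`:
a biadditive functor `E : Cᵒᵖ × C → Ab` together with an additive realization `real` of
extensions by conflations, satisfying (ET1)–(ET4) and their duals. -/
structure ExtCat where
  /-- the biadditive functor `E : Cᵒᵖ × C → Ab`. -/
  E : Cᵒᵖ ⥤ C ⥤ AddCommGrpCat.{v}
  additive₁ : E.Additive
  additive₂ : ∀ c : Cᵒᵖ, (E.obj c).Additive
  /-- `real x y δ` says that the sequence `x, y` realizes the extension `δ`, i.e.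
  `(x, y, δ)` is an `E`-triangle. -/
  real : ∀ {a b c : C}, (a ⟶ b) → (b ⟶ c) → ((E.obj (op c)).obj a) → Prop
  /-- every extension is realized by some conflation. -/
  real_exists : ∀ {a c : C} (δ : (E.obj (op c)).obj a),
    ∃ (b : C) (x : a ⟶ b) (y : b ⟶ c), real x y δ
  /-- the realization is well defined on equivalence classes of sequences. -/
  real_congr : ∀ {a b b' c : C} {x : a ⟶ b} {y : b ⟶ c} {x' : a ⟶ b'} {y' : b' ⟶ c}
    {δ : (E.obj (op c)).obj a} (e : b ≅ b'),
      x ≫ e.hom = x' → e.hom ≫ y' = y → real x y δ → real x' y' δ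
  /-- any two realizations of the same extension are equivalent sequences. -/
  real_unique : ∀ {a b b' c : C} {x : a ⟶ b} {y : b ⟶ c} {x' : a ⟶ b'} {y' : b' ⟶ c}
    {δ : (E.obj (op c)).obj a}, real x y δ → real x' y' δ →
      ∃ e : b ≅ b', x ≫ e.hom = x' ∧ e.hom ≫ y' = y
  /-- (ET2) realization of morphisms of extensions: if `f_* δ = g^* δ'` then `(f, g)` extends to
  a morphism of the realizing `E`-triangles. -/
  real_lift : ∀ {a b c a' b' c' : C} {x : a ⟶ b} {y : b ⟶ c} {x' : a' ⟶ b'} {y' : b' ⟶ c'}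
    {δ : (E.obj (op c)).obj a} {δ' : (E.obj (op c')).obj a'} (f : a ⟶ a') (g : c ⟶ c'),
      real x y δ → real x' y' δ' →
      ((E.obj (op c)).map f) δ = ((E.map g.op).app a') δ' →
      ∃ m : b ⟶ b', x ≫ m = f ≫ x' ∧ m ≫ y' = y ≫ g
  /-- the realization is additive, part (i): split extensions are realized by split sequences. -/
  real_zero : ∀ a c : C,
    real (biprod.inl : a ⟶ a ⊞ c) (biprod.snd : a ⊞ c ⟶ c) (0 : (E.obj (op c)).obj a)
  /-- the realization is additive, part (ii): it commutes with direct sums. -/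
  real_sum : ∀ {a b c a' b' c' : C} {x : a ⟶ b} {y : b ⟶ c} {x' : a' ⟶ b'} {y' : b' ⟶ c'}
    {δ : (E.obj (op c)).obj a} {δ' : (E.obj (op c')).obj a'},
      real x y δ → real x' y' δ' →
      real (biprod.map x x') (biprod.map y y')
        (((E.map (biprod.fst : c ⊞ c' ⟶ c).op).app (a ⊞ a'))
            (((E.obj (op c)).map (biprod.inl : a ⟶ a ⊞ a')) δ) +
         ((E.map (biprod.snd : c ⊞ c' ⟶ c').op).app (a ⊞ a'))
            (((E.obj (op c')).map (biprod.inr : a' ⟶ a ⊞ a')) δ'))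
  /-- (ET3). -/
  et3 : ∀ {a b c a' b' c' : C} {x : a ⟶ b} {y : b ⟶ c} {x' : a' ⟶ b'} {y' : b' ⟶ c'}
    {δ : (E.obj (op c)).obj a} {δ' : (E.obj (op c')).obj a'} (f : a ⟶ a') (m : b ⟶ b'),
      real x y δ → real x' y' δ' → x ≫ m = f ≫ x' →
      ∃ g : c ⟶ c', y ≫ g = m ≫ y' ∧ ((E.obj (op c)).map f) δ = ((E.map g.op).app a') δ'
  /-- (ET3)ᵒᵖ. -/
  et3op : ∀ {a b c a' b' c' : C} {x : a ⟶ b} {y : b ⟶ c} {x' : a' ⟶ b'} {y' : b' ⟶ c'}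
    {δ : (E.obj (op c)).obj a} {δ' : (E.obj (op c')).obj a'} (g : c ⟶ c') (m : b ⟶ b'),
      real x y δ → real x' y' δ' → m ≫ y' = y ≫ g →
      ∃ f : a ⟶ a', x ≫ m = f ≫ x' ∧ ((E.obj (op c)).map f) δ = ((E.map g.op).app a') δ'
  /-- (ET4). -/
  et4 : ∀ {A B D F G : C} {f : A ⟶ B} {f' : B ⟶ D} {g : B ⟶ G} {g' : G ⟶ F}
    {δ : (E.obj (op D)).obj A} {δ' : (E.obj (op F)).obj B},
      real f f' δ → real g g' δ' →
      ∃ (Eo : C) (d : D ⟶ Eo) (e : Eo ⟶ F) (h' : G ⟶ Eo) (δ'' : (E.obj (op Eo)).obj A),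
        real (f ≫ g) h' δ'' ∧ f' ≫ d = g ≫ h' ∧ h' ≫ e = g' ∧
        real d e (((E.obj (op F)).map f') δ') ∧
        ((E.map d.op).app A) δ'' = δ ∧
        ((E.obj (op Eo)).map f) δ'' = ((E.map e.op).app B) δ'
  /-- (ET4)ᵒᵖ. -/
  et4op : ∀ {A B D F Cc : C} {f' : D ⟶ A} {f : A ⟶ B} {g' : F ⟶ B} {g : B ⟶ Cc}
    {δ : (E.obj (op B)).obj D} {δ' : (E.obj (op Cc)).obj F},
      real f' f δ → real g' g δ' →
      ∃ (Eo : C) (d : D ⟶ Eo) (e : Eo ⟶ F) (h' : Eo ⟶ A) (δ'' : (E.obj (op Cc)).obj Eo),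
        real h' (f ≫ g) δ'' ∧ d ≫ h' = f' ∧ h' ≫ f = e ≫ g' ∧
        real d e (((E.map g'.op).app D) δ) ∧
        ((E.obj (op Cc)).map e) δ'' = δ' ∧
        ((E.obj (op B)).map d) δ = ((E.map g.op).app Eo) δ''

end ExtCatDef

namespace ExtCat

variable {C : Type u} [Category.{v} C] [Preadditive C] [HasFiniteBiproducts C]
variable (ξ : ExtCat C)

/-- The extension group `E(c, a)`. -/
abbrev Ext (c a : C) : Type v := (ξ.E.obj (op c)).obj a

/-- Pushforward `f_* : E(c, a) → E(c, a')` along `f : a ⟶ a'`. -/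
def push (c : C) {a a' : C} (f : a ⟶ a') (δ : ξ.Ext c a) : ξ.Ext c a' :=
  ((ξ.E.obj (op c)).map f) δ

/-- Pullback `g^* : E(c, a) → E(c', a)` along `g : c' ⟶ c`. -/
def pull (a : C) {c c' : C} (g : c' ⟶ c) (δ : ξ.Ext c a) : ξ.Ext c' a :=
  ((ξ.E.map g.op).app a) δ

/-- An object `P` is projective if `E(P, A) = 0` for all `A`. -/
def ProjObj (P : C) : Prop := ∀ (A : C) (δ : ξ.Ext P A), δ = 0

/-- An object `I` is injective if `E(A, I) = 0` for all `A`. -/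
def InjObj (I : C) : Prop := ∀ (A : C) (δ : ξ.Ext A I), δ = 0

end ExtCat

section SubcatDefs

variable {C : Type u} [Category.{v} C] [Preadditive C] [HasFiniteBiproducts C]

/-- `X` is closed under cones of inflations: for every `E`-triangle `A ⟶ B ⟶ C --δ-->` with
`A, B ∈ X` one has `C ∈ X`. -/
def ConeClosed (ξ : ExtCat C) (X : Set C) : Prop :=
  ∀ {A B Cc : C} (f : A ⟶ B) (g : B ⟶ Cc) (δ : ξ.Ext Cc A),
    ξ.real f g δ → A ∈ X → B ∈ X → Cc ∈ X

/-- `X` is closed under cocones of deflations: for every `E`-triangle `A ⟶ B ⟶ C --δ-->` with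
`B, C ∈ X` one has `A ∈ X`. -/
def CoconeClosed (ξ : ExtCat C) (X : Set C) : Prop :=
  ∀ {A B Cc : C} (f : A ⟶ B) (g : B ⟶ Cc) (δ : ξ.Ext Cc A),
    ξ.real f g δ → B ∈ X → Cc ∈ X → A ∈ X

/-- `X` is closed under extensions. -/
def ExtClosed (ξ : ExtCat C) (X : Set C) : Prop :=
  ∀ {A B Cc : C} (f : A ⟶ B) (g : B ⟶ Cc) (δ : ξ.Ext Cc A),
    ξ.real f g δ → A ∈ X → Cc ∈ X → B ∈ X

/-- `G` is a generator of `C`: every object `A` admits an `E`-triangle `A₁ ⟶ G₀ ⟶ A --δ-->`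
with `G₀ ∈ G`. -/
def IsGenerator (ξ : ExtCat C) (G : Set C) : Prop :=
  ∀ A : C, ∃ G₀ ∈ G, ∃ (A₁ : C) (f : A₁ ⟶ G₀) (g : G₀ ⟶ A) (δ : ξ.Ext A A₁), ξ.real f g δ

/-- `G` is a cogenerator of `C`: every object `A` admits an `E`-triangle
`A ⟶ G₀ ⟶ A₁ --θ-->` with `G₀ ∈ G`. -/
def IsCogenerator (ξ : ExtCat C) (G : Set C) : Prop :=
  ∀ A : C, ∃ G₀ ∈ G, ∃ (A₁ : C) (f : A ⟶ G₀) (g : G₀ ⟶ A₁) (δ : ξ.Ext A₁ A), ξ.real f g δ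

/-- `X` is a `G`-resolving subcategory. -/
def GResolving (ξ : ExtCat C) (G X : Set C) : Prop :=
  AddSub C X ∧ ExtClosed ξ X ∧ CoconeClosed ξ X ∧ G ⊆ X

/-- `X` is a `G`-coresolving subcategory. -/
def GCoresolving (ξ : ExtCat C) (G X : Set C) : Prop :=
  AddSub C X ∧ ExtClosed ξ X ∧ ConeClosed ξ X ∧ G ⊆ X

end SubcatDefs

/-! Given a conflation with two terms in `X`, density puts the third term `Z` inside some
`Z ⊞ Z' ∈ X`; adding a split conflation to the given one produces a conflation whose two relevant
terms lie in `X`, so the closure hypothesis puts a biproduct `Z ⊞ W` or `W ⊞ Z` with `W ∈ X`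
into `X`. The split conflation between `W` and `Z` then gives `Z ∈ X`. -/

section Closure

variable {C : Type u} [Category.{v} C] [Preadditive C] [HasFiniteBiproducts C]
  {ξ : ExtCat C} {X : Set C}

theorem ExtCat.exists_real_biprod_split {A B Cc : C} {f : A ⟶ B} {g : B ⟶ Cc}
    {δ : ξ.Ext Cc A} (h : ξ.real f g δ) (D D' : C) :
    ∃ (x : A ⊞ D ⟶ B ⊞ (D ⊞ D')) (y : B ⊞ (D ⊞ D') ⟶ Cc ⊞ D')
      (ε : ξ.Ext (Cc ⊞ D') (A ⊞ D)), ξ.real x y ε :=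
  ⟨_, _, _, ξ.real_sum h (ξ.real_zero D D')⟩

theorem AddSub.biprod_comm_mem (hX : AddSub C X) {A B : C} (h : (A ⊞ B) ∈ X) : (B ⊞ A) ∈ X :=
  hX.2.2 h ⟨biprod.braiding A B⟩

theorem DenseSub.exists_biprod_mem (hdense : DenseSub X) (hX : AddSub C X) (A : C) :
    ∃ A' : C, (A ⊞ A') ∈ X :=
  let ⟨_, hX₀, A', ⟨e⟩⟩ := hdense A
  ⟨A', hX.2.2 hX₀ ⟨e⟩⟩

theorem ConeClosed.mem_of_biprod_mem (h : ConeClosed ξ X) {A Z : C} (hA : A ∈ X)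
    (hAZ : (A ⊞ Z) ∈ X) : Z ∈ X :=
  h _ _ _ (ξ.real_zero A Z) hA hAZ

theorem CoconeClosed.mem_of_biprod_mem (h : CoconeClosed ξ X) {A Z : C} (hZA : (Z ⊞ A) ∈ X)
    (hA : A ∈ X) : Z ∈ X :=
  h _ _ _ (ξ.real_zero Z A) hZA hA

theorem ConeClosed.coconeClosed (h : ConeClosed ξ X) (hX : AddSub C X) (hdense : DenseSub X) :
    CoconeClosed ξ X := by
  intro A B Cc f g δ hfg hB hCc
  obtain ⟨A', hAA'⟩ := hdense.exists_biprod_mem hX A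
  obtain ⟨x, y, ε, hxy⟩ := ξ.exists_real_biprod_split hfg A' A
  have hCcA : (Cc ⊞ A) ∈ X := h x y ε hxy hAA' (hX.2.1 hB (hX.biprod_comm_mem hAA'))
  exact h.mem_of_biprod_mem hCc hCcA

theorem CoconeClosed.coneClosed (h : CoconeClosed ξ X) (hX : AddSub C X) (hdense : DenseSub X) :
    ConeClosed ξ X := by
  intro A B Cc f g δ hfg hA hB
  obtain ⟨C', hCcC'⟩ := hdense.exists_biprod_mem hX Cc
  obtain ⟨x, y, ε, hxy⟩ := ξ.exists_real_biprod_split hfg Cc C'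
  have hACc : (A ⊞ Cc) ∈ X := h x y ε hxy (hX.2.1 hB hCcC') hCcC'
  exact h.mem_of_biprod_mem (hX.biprod_comm_mem hACc) hA

end Closure

theorem stmt12_general (C : Type u) [Category.{v} C] [Preadditive C] [HasFiniteBiproducts C]
    (ξ : ExtCat C) (X : Set C)
    (hadd : AddSub C X) (hdense : DenseSub X) :
    ConeClosed ξ X ↔ CoconeClosed ξ X :=
  ⟨fun h => h.coconeClosed hadd hdense, fun h => h.coneClosed hadd hdense⟩

theorem stmt12 (C : Type u) [Category.{v} C] [Preadditive C] [HasFiniteBiproducts C]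
    [EssentiallySmall.{w} C] (ξ : ExtCat C) (X : Set C)
    (hadd : AddSub C X) (hdense : DenseSub X) :
    ConeClosed ξ X ↔ CoconeClosed ξ X :=
  stmt12_general C ξ X hadd hdense
end
end

section
/- Let C be an essentially small extriangulated category with a generator G, and let X be a dense G-resolving subcategory of C. Then for any A ∈ C, one has A ∈ X if and only if [A] ∈ ⟨[X] | X ∈ X⟩, where ⟨[X] | X ∈ X⟩ is the subgroup of K_0(C) generated by the elements [X] with X ∈ X. -/
open CategoryTheory CategoryTheory.Limits Opposite ZeroObject

attribute [local instance] CategoryTheory.Limits.hasBinaryBiproducts_of_finite_biproducts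

universe w v u

noncomputable section

section K0Defs

variable (C : Type u) [Category.{v} C] [Preadditive C] [HasFiniteBiproducts C]

/-- The relations `[A] + [B] - [A ⊞ B]` and `[A] - [B]` for `A ≅ B`, defining `K₀(C, 0)`. -/
def relAdd : Set (FreeAbelianGroup C) :=
  {x | (∃ A B : C,
          x = FreeAbelianGroup.of A + FreeAbelianGroup.of B - FreeAbelianGroup.of (A ⊞ B)) ∨
       (∃ A B : C, Nonempty (A ≅ B) ∧ x = FreeAbelianGroup.of A - FreeAbelianGroup.of B)}

/-- `K₀(C, 0)`: the free abelian group on the isomorphism classes of objects of `C`. -/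
abbrev K0Zero := FreeAbelianGroup C ⧸ AddSubgroup.closure (relAdd C)

/-- The class `[A]` of an object `A` in `K₀(C, 0)`. -/
def clsZero (A : C) : K0Zero C := QuotientAddGroup.mk (FreeAbelianGroup.of A)

/-- The set of elements `[δ] = [A] + [C] - [B]` of `K₀(C, 0)` for all `E`-triangles
`A ⟶ B ⟶ C --δ-->`. -/
def conflRel (ξ : ExtCat C) : Set (K0Zero C) :=
  {x | ∃ (A B Cc : C) (f : A ⟶ B) (g : B ⟶ Cc) (δ : ξ.Ext Cc A),
        ξ.real f g δ ∧ x = clsZero C A + clsZero C Cc - clsZero C B}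

/-- The Grothendieck group `K₀(C)` of the extriangulated category. -/
abbrev K0Ext (ξ : ExtCat C) := K0Zero C ⧸ AddSubgroup.closure (conflRel C ξ)

/-- The canonical epimorphism `ψ : K₀(C, 0) → K₀(C)`. -/
def psiExt (ξ : ExtCat C) : K0Zero C →+ K0Ext C ξ := QuotientAddGroup.mk' _

/-- The class `[A]` of an object `A` in `K₀(C)`. -/
def k0clsE (ξ : ExtCat C) (A : C) : K0Ext C ξ := psiExt C ξ (clsZero C A)

end K0Defs

/-!
Call `A` and `B` stably isomorphic if `A ⊞ U ≅ B ⊞ V` for some `U, V ∈ X`. Since `X` is additive,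
the stable classes form a commutative monoid under `⊞` in which `X` is the class of `0`, and
density of `X` makes every class invertible. Padding an `E`-triangle `A ⟶ B ⟶ C` by a split
triangle so that its ends lie in `X` shows, by closure under extensions, that `[A] + [C] = [B]`
on stable classes; hence `K₀(C)` maps to the group of units of this monoid, `[X] ↦ 0`. So if `[A]`
lies in the span of `[X]`, then `A ⊞ U ∈ X` for some `U ∈ X`, and `A ∈ X` as the cocone of the
split deflation `A ⊞ U ⟶ U`.
-/

section StableIso

variable {C : Type u} [Category.{v} C] [Preadditive C] [HasFiniteBiproducts C]

def biprodInterchange (P Q R S : C) : (P ⊞ Q) ⊞ (R ⊞ S) ≅ (P ⊞ R) ⊞ (Q ⊞ S) :=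
  biprod.associator P Q (R ⊞ S) ≪≫
    biprod.mapIso (Iso.refl P)
      ((biprod.associator Q R S).symm ≪≫
        biprod.mapIso (biprod.braiding Q R) (Iso.refl S) ≪≫ biprod.associator R Q S) ≪≫
    (biprod.associator P R (Q ⊞ S)).symm

def StablyIso (X : Set C) (A B : C) : Prop := ∃ U ∈ X, ∃ V ∈ X, Nonempty (A ⊞ U ≅ B ⊞ V)

variable {X : Set C}

namespace StablyIso

theorem of_iso (hX : AddSub C X) {A B : C} (e : A ≅ B) : StablyIso X A B :=
  ⟨0, hX.1, 0, hX.1, ⟨biprod.mapIso e (Iso.refl _)⟩⟩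

theorem symm {A B : C} : StablyIso X A B → StablyIso X B A :=
  fun ⟨U, hU, V, hV, ⟨e⟩⟩ => ⟨V, hV, U, hU, ⟨e.symm⟩⟩

theorem trans (hX : AddSub C X) {A B D : C} :
    StablyIso X A B → StablyIso X B D → StablyIso X A D := by
  rintro ⟨U₁, hU₁, V₁, hV₁, ⟨e₁⟩⟩ ⟨U₂, hU₂, V₂, hV₂, ⟨e₂⟩⟩
  refine ⟨U₁ ⊞ U₂, hX.2.1 hU₁ hU₂, V₂ ⊞ V₁, hX.2.1 hV₂ hV₁, ⟨?_⟩⟩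
  exact (biprod.associator A U₁ U₂).symm ≪≫ biprod.mapIso e₁ (Iso.refl U₂) ≪≫
    biprod.associator B V₁ U₂ ≪≫ biprod.mapIso (Iso.refl B) (biprod.braiding V₁ U₂) ≪≫
    (biprod.associator B U₂ V₁).symm ≪≫ biprod.mapIso e₂ (Iso.refl V₁) ≪≫
    biprod.associator D V₂ V₁

theorem biprod_congr (hX : AddSub C X) {A A' B B' : C} :
    StablyIso X A A' → StablyIso X B B' → StablyIso X (A ⊞ B) (A' ⊞ B') := by
  rintro ⟨U₁, hU₁, V₁, hV₁, ⟨e₁⟩⟩ ⟨U₂, hU₂, V₂, hV₂, ⟨e₂⟩⟩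
  refine ⟨U₁ ⊞ U₂, hX.2.1 hU₁ hU₂, V₁ ⊞ V₂, hX.2.1 hV₁ hV₂, ⟨?_⟩⟩
  exact biprodInterchange A B U₁ U₂ ≪≫ biprod.mapIso e₁ e₂ ≪≫
    (biprodInterchange A' B' V₁ V₂).symm

end StablyIso

variable (hX : AddSub C X)

def stablyIsoSetoid : Setoid C :=
  ⟨StablyIso X, ⟨fun A => .of_iso hX (Iso.refl A), .symm, .trans hX⟩⟩

def StableQuot : Type u := Quotient (stablyIsoSetoid hX)

namespace StableQuot

def mk (A : C) : StableQuot hX := Quotient.mk (stablyIsoSetoid hX) A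

theorem mk_eq_of_iso {A B : C} (e : A ≅ B) : mk hX A = mk hX B :=
  Quotient.sound (.of_iso hX e)

instance : Zero (StableQuot hX) := ⟨mk hX 0⟩

instance : Add (StableQuot hX) :=
  ⟨Quotient.lift₂ (fun A B => mk hX (A ⊞ B)) fun _ _ _ _ hA hB =>
    Quotient.sound (.biprod_congr hX hA hB)⟩

instance : AddCommMonoid (StableQuot hX) where
  nsmul := nsmulRec
  nsmul_zero _ := rfl
  nsmul_succ _ _ := rfl
  add_assoc := by
    rintro ⟨A⟩ ⟨B⟩ ⟨D⟩
    exact mk_eq_of_iso hX (biprod.associator A B D)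
  zero_add := by
    rintro ⟨A⟩
    exact mk_eq_of_iso hX (isoZeroBiprod (isZero_zero C)).symm
  add_zero := by
    rintro ⟨A⟩
    exact mk_eq_of_iso hX (isoBiprodZero (isZero_zero C)).symm
  add_comm := by
    rintro ⟨A⟩ ⟨B⟩
    exact mk_eq_of_iso hX (biprod.braiding A B)

theorem mk_biprod (A B : C) : mk hX (A ⊞ B) = mk hX A + mk hX B := rfl

theorem mk_eq_zero_of_mem {A : C} (hA : A ∈ X) : mk hX A = 0 :=
  Quotient.sound ⟨0, hX.1, A, hA, ⟨biprod.braiding A 0⟩⟩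

theorem isAddUnit_mk (hdense : DenseSub X) (A : C) : IsAddUnit (mk hX A) := by
  obtain ⟨X₀, hX₀, B, ⟨e⟩⟩ := hdense A
  refine .of_add_eq_zero (mk hX B) ?_
  rw [← mk_biprod, ← mk_eq_of_iso hX e]
  exact mk_eq_zero_of_mem hX hX₀

theorem mk_add_mk_eq_of_real (hdense : DenseSub X) {ξ : ExtCat C} (hext : ExtClosed ξ X)
    {A B D : C} {x : A ⟶ B} {y : B ⟶ D} {δ : ξ.Ext D A} (hxy : ξ.real x y δ) :
    mk hX A + mk hX D = mk hX B := by
  obtain ⟨XA, hXA, A', ⟨eA⟩⟩ := hdense A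
  obtain ⟨XD, hXD, D', ⟨eD⟩⟩ := hdense D
  have hA : (A ⊞ A') ∈ X := hX.2.2 hXA ⟨eA⟩
  have hD : (D ⊞ D') ∈ X := hX.2.2 hXD ⟨eD⟩
  have hB : (B ⊞ (A' ⊞ D')) ∈ X := hext _ _ _ (ξ.real_sum hxy (ξ.real_zero A' D')) hA hD
  have hpad : IsAddUnit (mk hX A' + mk hX D') :=
    (isAddUnit_mk hX hdense A').add (isAddUnit_mk hX hdense D')
  refine hpad.add_right_cancel ?_
  calc mk hX A + mk hX D + (mk hX A' + mk hX D')
      = mk hX (A ⊞ A') + mk hX (D ⊞ D') := by rw [mk_biprod, mk_biprod, add_add_add_comm]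
    _ = mk hX B + (mk hX A' + mk hX D') := by
      rw [mk_eq_zero_of_mem hX hA, mk_eq_zero_of_mem hX hD, ← mk_biprod, ← mk_biprod,
        mk_eq_zero_of_mem hX hB, add_zero]

theorem mem_of_mk_eq_zero {ξ : ExtCat C} (hcoc : CoconeClosed ξ X) {A : C}
    (hA : mk hX A = 0) : A ∈ X := by
  obtain ⟨U, hU, V, hV, ⟨e⟩⟩ := Quotient.exact (hA : mk hX A = mk hX 0)
  have hAU : (A ⊞ U) ∈ X := hX.2.2 (hX.2.1 hX.1 hV) ⟨e.symm⟩
  exact hcoc biprod.inl biprod.snd 0 (ξ.real_zero A U) hAU hU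

end StableQuot

end StableIso

section K0Lift

variable {C : Type u} [Category.{v} C] [Preadditive C] [HasFiniteBiproducts C]
variable {Γ : Type*} [AddCommGroup Γ] (f : C → Γ) (hiso : ∀ {A B : C}, (A ≅ B) → f A = f B)
  (hsum : ∀ A B : C, f (A ⊞ B) = f A + f B)

def k0ZeroLift : K0Zero C →+ Γ :=
  QuotientAddGroup.lift _ (FreeAbelianGroup.lift f) <| (AddSubgroup.closure_le _).2 <| by
    rintro _ (⟨A, B, rfl⟩ | ⟨A, B, ⟨e⟩, rfl⟩)
    · simp [hsum]
    · simp [hiso e]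

theorem k0ZeroLift_clsZero (A : C) : k0ZeroLift f hiso hsum (clsZero C A) = f A :=
  FreeAbelianGroup.lift_apply_of _ _

variable (ξ : ExtCat C) (hconfl : ∀ {A B D : C} (x : A ⟶ B) (y : B ⟶ D) (δ : ξ.Ext D A),
  ξ.real x y δ → f A + f D = f B)

def k0ExtLift : K0Ext C ξ →+ Γ :=
  QuotientAddGroup.lift _ (k0ZeroLift f hiso hsum) <| (AddSubgroup.closure_le _).2 <| by
    rintro _ ⟨A, B, D, x, y, δ, hxy, rfl⟩
    simp [k0ZeroLift_clsZero, hconfl x y δ hxy]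

theorem k0ExtLift_k0clsE (A : C) : k0ExtLift f hiso hsum ξ hconfl (k0clsE C ξ A) = f A :=
  k0ZeroLift_clsZero f hiso hsum A

end K0Lift

theorem stmt13_general (C : Type u) [Category.{v} C] [Preadditive C] [HasFiniteBiproducts C]
    (ξ : ExtCat C) (G : Set C)
    (X : Set C) (hdense : DenseSub X) (hres : GResolving ξ G X) (A : C) :
    A ∈ X ↔ k0clsE C ξ A ∈ AddSubgroup.closure (k0clsE C ξ '' X) := by
  obtain ⟨hX, hext, hcoc, -⟩ := hres
  refine ⟨fun hA => AddSubgroup.subset_closure ⟨A, hA, rfl⟩, fun h => ?_⟩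
  let u : C → AddUnits (StableQuot hX) := fun B => (StableQuot.isAddUnit_mk hX hdense B).addUnit
  let φ := k0ExtLift u (fun e => AddUnits.ext (StableQuot.mk_eq_of_iso hX e))
    (fun _ _ => AddUnits.ext (StableQuot.mk_biprod hX _ _)) ξ
    (fun _ _ _ hxy => AddUnits.ext (StableQuot.mk_add_mk_eq_of_real hX hdense hext hxy))
  have hker : AddSubgroup.closure (k0clsE C ξ '' X) ≤ φ.ker := by
    refine (AddSubgroup.closure_le _).2 ?_
    rintro _ ⟨B, hB, rfl⟩
    rw [SetLike.mem_coe, AddMonoidHom.mem_ker, k0ExtLift_k0clsE]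
    exact AddUnits.ext (StableQuot.mk_eq_zero_of_mem hX hB)
  have hA : φ (k0clsE C ξ A) = 0 := hker h
  rw [k0ExtLift_k0clsE] at hA
  exact StableQuot.mem_of_mk_eq_zero hX hcoc (congrArg AddUnits.val hA)

theorem stmt13 (C : Type u) [Category.{v} C] [Preadditive C] [HasFiniteBiproducts C]
    [EssentiallySmall.{w} C] (ξ : ExtCat C) (G : Set C) (hG : IsGenerator ξ G)
    (X : Set C) (hdense : DenseSub X) (hres : GResolving ξ G X) (A : C) :
    A ∈ X ↔ k0clsE C ξ A ∈ AddSubgroup.closure (k0clsE C ξ '' X) :=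
  stmt13_general C ξ G X hdense hres A
end
end
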